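/- Let δ ∈ ℝ^p satisfy ‖δ_{T₀ᶜ}‖₁ ≤ k₀‖δ_{T₀}‖₁ where T₀ indexes the s largest coordinates of δ in absolute value. Then ‖δ‖₂ ≤ ‖δ_{T₀}‖₂ + s^{-1/2}‖δ‖₁ ≤ (k₀+2)‖δ_{T₀}‖₂. -/

import Mathlib

open Finset

noncomputable def l1 {p : ℕ} (v : Fin p → ℝ) : ℝ := ∑ i, |v i|
noncomputable def l2 {p : ℕ} (v : Fin p → ℝ) : ℝ := Real.sqrt (∑ i, (v i) ^ 2)

def restr {p : ℕ} (T : Finset (Fin p)) (v : Fin p → ℝ) : Fin p → ℝ :=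
  fun i => if i ∈ T then v i else 0

variable {p : ℕ}

lemma Real.sqrt_add_le_add_sqrt {a b : ℝ} (ha : 0 ≤ a) (hb : 0 ≤ b) : √(a + b) ≤ √a + √b :=
  Real.sqrt_le_iff.mpr ⟨by positivity, by
    nlinarith [Real.sq_sqrt ha, Real.sq_sqrt hb, Real.sqrt_nonneg a, Real.sqrt_nonneg b]⟩

lemma l1_restr (T : Finset (Fin p)) (v : Fin p → ℝ) : l1 (restr T v) = ∑ i ∈ T, |v i| := by
  simp only [l1, restr, apply_ite, abs_zero, sum_ite_mem, univ_inter]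

lemma l2_restr (T : Finset (Fin p)) (v : Fin p → ℝ) :
    l2 (restr T v) = √(∑ i ∈ T, v i ^ 2) := by
  simp only [l2, restr, apply_ite (· ^ 2), ne_eq, OfNat.ofNat_ne_zero, not_false_eq_true,
    zero_pow, sum_ite_mem, univ_inter]

lemma l1_eq_l1_restr_add_l1_restr_compl (T : Finset (Fin p)) (v : Fin p → ℝ) :
    l1 v = l1 (restr T v) + l1 (restr Tᶜ v) := by
  rw [l1_restr, l1_restr, l1, sum_add_sum_compl]

lemma l2_le_l2_restr_add_l2_restr_compl (T : Finset (Fin p)) (v : Fin p → ℝ) :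
    l2 v ≤ l2 (restr T v) + l2 (restr Tᶜ v) := by
  rw [l2_restr, l2_restr, l2, ← sum_add_sum_compl T]
  exact Real.sqrt_add_le_add_sqrt (by positivity) (by positivity)

lemma l1_restr_le_sqrt_card_mul_l2_restr (T : Finset (Fin p)) (v : Fin p → ℝ) :
    l1 (restr T v) ≤ √(#T) * l2 (restr T v) := by
  have hcs := sq_sum_le_card_mul_sum_sq (s := T) (f := fun i => |v i|)
  simp only [sq_abs] at hcs
  rw [l1_restr, l2_restr, ← Real.sqrt_mul (Nat.cast_nonneg _)]
  exact Real.le_sqrt_of_sq_le hcs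

section Dominated

variable {T : Finset (Fin p)} {v : Fin p → ℝ} (hT : ∀ i ∈ T, ∀ j ∉ T, |v j| ≤ |v i|)
include hT

lemma card_mul_abs_le_l1_restr {j : Fin p} (hj : j ∉ T) : #T * |v j| ≤ l1 (restr T v) := by
  rw [l1_restr, ← nsmul_eq_mul, ← sum_const]
  exact sum_le_sum fun i hi => hT i hi j hj

/-- Each tail coordinate is at most the average head coordinate, so
`#T ‖v_{Tᶜ}‖₂² ≤ ‖v_T‖₁ ‖v_{Tᶜ}‖₁ ≤ ‖v‖₁²`. -/
lemma l2_restr_compl_mul_sqrt_card_le_l1 : l2 (restr Tᶜ v) * √(#T) ≤ l1 v := by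
  have hsq : #T * ∑ j ∈ Tᶜ, v j ^ 2 ≤ l1 (restr T v) * l1 (restr Tᶜ v) := by
    rw [mul_sum, l1_restr Tᶜ, mul_sum]
    refine sum_le_sum fun j hj => ?_
    rw [← sq_abs, sq, ← mul_assoc]
    exact mul_le_mul_of_nonneg_right (card_mul_abs_le_l1_restr hT (mem_compl.mp hj)) (abs_nonneg _)
  have hhead : 0 ≤ l1 (restr T v) := sum_nonneg fun _ _ => abs_nonneg _
  have htail : 0 ≤ l1 (restr Tᶜ v) := sum_nonneg fun _ _ => abs_nonneg _
  rw [l2_restr, ← Real.sqrt_mul (by positivity), mul_comm, l1_eq_l1_restr_add_l1_restr_compl T]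
  refine Real.sqrt_le_iff.mpr ⟨by positivity, hsq.trans ?_⟩
  nlinarith [mul_nonneg hhead htail]

end Dominated

theorem stmt2_general (p s : ℕ) (k0 : ℝ) (hs : 1 ≤ s) (hk0 : 0 < k0)
    (δ : Fin p → ℝ)
    (T0 : Finset (Fin p)) (hT0card : T0.card = s)
    (hT0max : ∀ i ∈ T0, ∀ j ∉ T0, |δ j| ≤ |δ i|)
    (hcone : l1 (restr T0ᶜ δ) ≤ k0 * l1 (restr T0 δ)) :
    l2 δ ≤ l2 (restr T0 δ) + (Real.sqrt s)⁻¹ * l1 δ ∧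
      l2 (restr T0 δ) + (Real.sqrt s)⁻¹ * l1 δ ≤ (k0 + 2) * l2 (restr T0 δ) := by
  have hsqrt : 0 < √(s : ℝ) := Real.sqrt_pos.mpr (by exact_mod_cast hs)
  have htail := l2_restr_compl_mul_sqrt_card_le_l1 hT0max
  have hhead := l1_restr_le_sqrt_card_mul_l2_restr T0 δ
  rw [hT0card] at htail hhead
  rw [inv_mul_eq_div]
  constructor
  · calc l2 δ ≤ l2 (restr T0 δ) + l2 (restr T0ᶜ δ) := l2_le_l2_restr_add_l2_restr_compl T0 δ
      _ ≤ l2 (restr T0 δ) + l1 δ / √s := by gcongr; rwa [le_div_iff₀ hsqrt]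
  · have hl1 : l1 δ ≤ (k0 + 1) * (√s * l2 (restr T0 δ)) := by
      rw [l1_eq_l1_restr_add_l1_restr_compl T0]
      linarith [mul_le_mul_of_nonneg_left hhead (by linarith : (0 : ℝ) ≤ k0 + 1)]
    have hscaled : l1 δ / √s ≤ (k0 + 1) * l2 (restr T0 δ) := by
      rw [div_le_iff₀ hsqrt]; linarith
    linarith

/-- ‖δ‖₂ ≤ ‖δ_{T₀}‖₂ + s^{-1/2}‖δ‖₁ ≤ (k₀+2)‖δ_{T₀}‖₂. -/
theorem stmt2 (p s : ℕ) (k0 : ℝ) (hs : 1 ≤ s) (hsp : 2 * s ≤ p) (hk0 : 0 < k0)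
    (δ : Fin p → ℝ)
    (T0 : Finset (Fin p)) (hT0card : T0.card = s)
    (hT0max : ∀ i ∈ T0, ∀ j ∉ T0, |δ j| ≤ |δ i|)
    (hcone : l1 (restr T0ᶜ δ) ≤ k0 * l1 (restr T0 δ)) :
    l2 δ ≤ l2 (restr T0 δ) + (Real.sqrt s)⁻¹ * l1 δ ∧
      l2 (restr T0 δ) + (Real.sqrt s)⁻¹ * l1 δ ≤ (k0 + 2) * l2 (restr T0 δ) :=
  stmt2_general p s k0 hs hk0 δ T0 hT0card hT0max hcone
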